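/- arXiv:1611.00720 — 3 statements merged into one kernel-verified Lean document; each statement's English description precedes it below -/
import Mathlib

section
/- For integers D, Q, X ≥ 1 and B ∈ ℕ with Q ≤ 2·X^(1/B), the number of integers n with |n| ≤ X such that the truncated divisor count d(n,Q) is at least D is at most C(ε,B) · D^(−B) · Q^ε · X, for every ε > 0. -/
/-!
Markov's inequality for the `B`-th moment gives `D ^ B · #{n : d(n,Q) ≥ D} ≤ ∑_{|n| ≤ X} d(n,Q) ^ B`.
Expanding the power, the moment counts pairs of a tuple `(d₁, …, d_B) ∈ [1,Q]^B` and an `n`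
divisible by `lcm(d₁, …, d_B)`; there are at most `2X / lcm + 1` such `n`, and the `+ 1` terms
add up to `Q ^ B ≤ 2 ^ B X`. A number `k ≤ Q ^ B` is the lcm of at most `τ(k) ^ B` tuples, so
`∑ 1 / lcm ≤ ∑_{k ≤ Q^B} τ(k) ^ B / k`, which is `O(Q ^ ε)` by the divisor bound `τ(k) = O(k ^ δ)`.
-/

open Finset Real

theorem add_one_le_max_inv_mul_exp {t x : ℝ} (ht : 0 < t) (hx : 0 ≤ x) :
    x + 1 ≤ max 1 t⁻¹ * exp (t * x) := by
  rcases le_or_gt t 1 with ht1 | ht1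
  · -- `t (x + 1) ≤ t x + 1 ≤ exp (t x)`
    rw [max_eq_right (one_le_inv₀ ht |>.mpr ht1), ← div_eq_inv_mul, le_div_iff₀' ht]
    nlinarith [add_one_le_exp (t * x)]
  · calc x + 1 ≤ exp x := by linarith [add_one_le_exp x]
      _ ≤ exp (t * x) := exp_le_exp.mpr (by nlinarith)
      _ ≤ max 1 t⁻¹ * exp (t * x) := le_mul_of_one_le_left (exp_pos _).le (le_max_left _ _)

theorem add_one_le_rpow_mul_of_two_le_rpow {p δ : ℝ} (hp : 0 ≤ p) (h2 : 2 ≤ p ^ δ) (a : ℕ) :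
    (a : ℝ) + 1 ≤ p ^ (δ * a) := by
  calc (a : ℝ) + 1 ≤ 2 ^ a := by exact_mod_cast Nat.lt_two_pow_self
    _ ≤ (p ^ δ) ^ a := pow_le_pow_left₀ (by norm_num) h2 a
    _ = p ^ (δ * a) := by rw [← rpow_natCast, ← rpow_mul hp]

theorem add_one_le_mul_rpow_mul {p δ : ℝ} (hp : 2 ≤ p) (hδ : 0 < δ) (a : ℕ) :
    (a : ℝ) + 1 ≤ max 1 (δ * log 2)⁻¹ * p ^ (δ * a) := by
  calc (a : ℝ) + 1 ≤ max 1 (δ * log 2)⁻¹ * exp (δ * log 2 * a) :=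
        add_one_le_max_inv_mul_exp (by positivity) a.cast_nonneg
    _ = max 1 (δ * log 2)⁻¹ * 2 ^ (δ * a) := by
        rw [rpow_def_of_pos two_pos]; ring_nf
    _ ≤ max 1 (δ * log 2)⁻¹ * p ^ (δ * a) := by gcongr

theorem Nat.prod_primeFactors_rpow_mul_factorization {m : ℕ} (hm : m ≠ 0) (δ : ℝ) :
    ∏ p ∈ m.primeFactors, (p : ℝ) ^ (δ * m.factorization p) = (m : ℝ) ^ δ := by
  have h : ∀ p ∈ m.primeFactors, (p : ℝ) ^ (δ * m.factorization p) =
      ((p ^ m.factorization p : ℕ) : ℝ) ^ δ := fun p _ => by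
    rw [mul_comm, rpow_mul p.cast_nonneg, rpow_natCast, Nat.cast_pow]
  rw [prod_congr rfl h, Real.finsetProd_rpow _ _ fun _ _ => by positivity, ← Nat.cast_prod,
    ← Nat.prod_factorization_eq_prod_primeFactors, Nat.prod_factorization_pow_eq_self hm]

theorem Nat.card_divisors_le_mul_rpow {δ : ℝ} (hδ : 0 < δ) :
    ∃ C : ℝ, 0 < C ∧ ∀ m : ℕ, m ≠ 0 → (#m.divisors : ℝ) ≤ C * (m : ℝ) ^ δ := by
  set c : ℝ := max 1 (δ * Real.log 2)⁻¹
  have hc : 1 ≤ c := le_max_left _ _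
  -- primes `p ≥ K` have `p ^ δ ≥ 2`, so only the primes below `K` cost a factor `c`
  set K : ℕ := ⌈(2 : ℝ) ^ δ⁻¹⌉₊
  refine ⟨c ^ K, by positivity, fun m hm => ?_⟩
  have hfactor : ∀ p ∈ m.primeFactors, (m.factorization p : ℝ) + 1 ≤
      (if p < K then c else 1) * (p : ℝ) ^ (δ * m.factorization p) := by
    intro p hp
    have hp2 : (2 : ℝ) ≤ p := by exact_mod_cast (Nat.prime_of_mem_primeFactors hp).two_le
    split_ifs with hpK
    · exact add_one_le_mul_rpow_mul hp2 hδ (m.factorization p)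
    · rw [one_mul]
      refine add_one_le_rpow_mul_of_two_le_rpow (by positivity) ?_ _
      have : (2 : ℝ) ^ δ⁻¹ ≤ p := (Nat.le_ceil _).trans (by exact_mod_cast not_lt.mp hpK)
      calc (2 : ℝ) = ((2 : ℝ) ^ δ⁻¹) ^ δ := by
            rw [← rpow_mul two_pos.le, inv_mul_cancel₀ hδ.ne', rpow_one]
        _ ≤ (p : ℝ) ^ δ := by gcongr
  have hsmall : ∏ p ∈ m.primeFactors, (if p < K then c else 1) ≤ c ^ K := by
    rw [prod_ite, prod_const, prod_const, one_pow, mul_one]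
    refine pow_le_pow_right₀ hc ((card_le_card fun p hp => ?_).trans (card_range K).le)
    exact mem_range.mpr (mem_filter.mp hp).2
  calc (#m.divisors : ℝ) = ∏ p ∈ m.primeFactors, ((m.factorization p : ℝ) + 1) := by
        rw [Nat.card_divisors hm]; push_cast; rfl
    _ ≤ ∏ p ∈ m.primeFactors,
        (if p < K then c else 1) * (p : ℝ) ^ (δ * m.factorization p) :=
        prod_le_prod (fun _ _ => by positivity) hfactor
    _ ≤ c ^ K * (m : ℝ) ^ δ := by
        rw [prod_mul_distrib, Nat.prod_primeFactors_rpow_mul_factorization hm]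
        gcongr

theorem sum_Icc_inv_le_mul_rpow {η : ℝ} (hη : 0 < η) {N : ℕ} (hN : 1 ≤ N) :
    ∑ k ∈ Icc 1 N, (k : ℝ)⁻¹ ≤ (1 + η⁻¹) * (N : ℝ) ^ η := by
  have hharm : ∑ k ∈ Icc 1 N, (k : ℝ)⁻¹ ≤ 1 + log N := by
    have := harmonic_le_one_add_log N
    rw [harmonic_eq_sum_Icc] at this
    push_cast at this
    exact this
  have hN1 : (1 : ℝ) ≤ (N : ℝ) ^ η := one_le_rpow (by exact_mod_cast hN) hη.le
  have hlog : log N ≤ (N : ℝ) ^ η / η := log_le_rpow_div N.cast_nonneg hη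
  rw [add_mul, one_mul, ← div_eq_inv_mul]
  linarith

theorem sum_card_divisors_pow_div_le (B : ℕ) {η : ℝ} (hη : 0 < η) :
    ∃ C : ℝ, 0 < C ∧ ∀ N : ℕ, 1 ≤ N →
      ∑ k ∈ Icc 1 N, (#k.divisors : ℝ) ^ B / k ≤ C * (N : ℝ) ^ η := by
  set δ := η / (2 * (B + 1))
  obtain ⟨Cd, hCd, hdiv⟩ := Nat.card_divisors_le_mul_rpow (δ := δ) (by positivity)
  refine ⟨Cd ^ B * (1 + (η / 2)⁻¹), by positivity, fun N hN => ?_⟩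
  have hδB : δ * B ≤ η / 2 := by
    rw [div_mul_eq_mul_div, div_le_div_iff₀ (by positivity) two_pos]; nlinarith
  have hterm : ∀ k ∈ Icc 1 N,
      (#k.divisors : ℝ) ^ B / k ≤ Cd ^ B * (N : ℝ) ^ (η / 2) * (k : ℝ)⁻¹ := by
    intro k hk
    obtain ⟨hk1, hkN⟩ := mem_Icc.mp hk
    rw [div_eq_mul_inv]
    gcongr
    calc (#k.divisors : ℝ) ^ B ≤ (Cd * (k : ℝ) ^ δ) ^ B := by
          gcongr; exact hdiv k (by omega)
      _ = Cd ^ B * (k : ℝ) ^ (δ * B) := by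
          rw [mul_pow, ← rpow_natCast ((k : ℝ) ^ δ), ← rpow_mul (by positivity)]
      _ ≤ Cd ^ B * (N : ℝ) ^ (η / 2) := by
          gcongr
          calc (k : ℝ) ^ (δ * B) ≤ (N : ℝ) ^ (δ * B) := by gcongr
            _ ≤ (N : ℝ) ^ (η / 2) := rpow_le_rpow_of_exponent_le (by exact_mod_cast hN) hδB
  calc ∑ k ∈ Icc 1 N, (#k.divisors : ℝ) ^ B / k
      ≤ Cd ^ B * (N : ℝ) ^ (η / 2) * ∑ k ∈ Icc 1 N, (k : ℝ)⁻¹ := by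
        rw [mul_sum]; exact sum_le_sum hterm
    _ ≤ Cd ^ B * (N : ℝ) ^ (η / 2) * ((1 + (η / 2)⁻¹) * (N : ℝ) ^ (η / 2)) := by
        gcongr; exact sum_Icc_inv_le_mul_rpow (by positivity) hN
    _ = Cd ^ B * (1 + (η / 2)⁻¹) * (N : ℝ) ^ η := by
        rw [mul_mul_mul_comm, ← rpow_add (by positivity), add_halves]

theorem lcm_mem_Icc_of_mem_piFinset {Q B : ℕ} {p : Fin B → ℕ}
    (hp : p ∈ Fintype.piFinset fun _ => Icc 1 Q) : univ.lcm p ∈ Icc 1 (Q ^ B) := by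
  simp only [Fintype.mem_piFinset, mem_Icc] at hp
  have hprod : ∏ i, p i ≤ Q ^ B := by
    simpa using prod_le_prod' (s := univ) fun i _ => (hp i).2
  have hne : univ.lcm p ≠ 0 := lcm_ne_zero_iff.mpr fun i _ => by have := (hp i).1; omega
  have hdvd : univ.lcm p ∣ ∏ i, p i := lcm_dvd fun i _ => dvd_prod_of_mem p (mem_univ i)
  exact mem_Icc.mpr ⟨Nat.one_le_iff_ne_zero.mpr hne,
    (Nat.le_of_dvd (prod_pos fun i _ => (hp i).1) hdvd).trans hprod⟩

theorem sum_inv_lcm_le_sum_card_divisors_pow_div (Q B : ℕ) :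
    ∑ p ∈ Fintype.piFinset (fun _ : Fin B => Icc 1 Q), ((univ.lcm p : ℕ) : ℝ)⁻¹ ≤
      ∑ k ∈ Icc 1 (Q ^ B), (#k.divisors : ℝ) ^ B / k := by
  rw [← sum_fiberwise_of_maps_to fun p => lcm_mem_Icc_of_mem_piFinset]
  refine sum_le_sum fun k hk => ?_
  have hfiber : {p ∈ Fintype.piFinset (fun _ : Fin B => Icc 1 Q) | univ.lcm p = k} ⊆
      Fintype.piFinset fun _ => k.divisors := by
    intro p hp
    obtain ⟨-, rfl⟩ := mem_filter.mp hp
    refine Fintype.mem_piFinset.mpr fun i => Nat.mem_divisors.mpr ⟨dvd_lcm (mem_univ i), ?_⟩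
    exact Nat.one_le_iff_ne_zero.mp (mem_Icc.mp hk).1
  rw [sum_congr rfl fun p hp => by rw [(mem_filter.mp hp).2], sum_const, nsmul_eq_mul,
    div_eq_mul_inv]
  gcongr
  exact_mod_cast (card_le_card hfiber).trans (Fintype.card_piFinset_const _ _).le

theorem sum_inv_lcm_le_mul_rpow (B : ℕ) {ε : ℝ} (hε : 0 < ε) :
    ∃ C : ℝ, 0 < C ∧ ∀ Q : ℕ, 1 ≤ Q →
      ∑ p ∈ Fintype.piFinset (fun _ : Fin B => Icc 1 Q), ((univ.lcm p : ℕ) : ℝ)⁻¹ ≤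
        C * (Q : ℝ) ^ ε := by
  obtain ⟨C, hC, hsum⟩ := sum_card_divisors_pow_div_le B (η := ε / (B + 1)) (by positivity)
  refine ⟨C, hC, fun Q hQ => (sum_inv_lcm_le_sum_card_divisors_pow_div Q B).trans
    ((hsum _ (Nat.one_le_pow _ _ hQ)).trans ?_)⟩
  rw [Nat.cast_pow, ← rpow_natCast, ← rpow_mul (by positivity)]
  refine mul_le_mul_of_nonneg_left (rpow_le_rpow_of_exponent_le (by exact_mod_cast hQ) ?_) hC.le
  rw [mul_div_assoc', div_le_iff₀ (by positivity)]
  linarith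

theorem card_Icc_filter_dvd_int_eq (Q : ℕ) (n : ℤ) :
    #{d ∈ Icc (1 : ℤ) Q | d ∣ n} = #{d ∈ Icc 1 Q | d ∣ n.natAbs} := by
  refine card_nbij' Int.natAbs (↑) ?_ ?_ ?_ ?_ <;> intro d hd <;>
    simp only [coe_filter, mem_Icc, Set.mem_ofPred_eq] at hd ⊢
  · exact ⟨by omega, Int.natAbs_dvd_natAbs.mpr hd.2⟩
  · exact ⟨by omega, Int.natCast_dvd.mpr hd.2⟩
  · omega
  · omega

theorem sum_card_filter_pow_eq {α β : Type*} (S : Finset α) (T : Finset β) (r : β → α → Prop)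
    [∀ b a, Decidable (r b a)] (B : ℕ) :
    ∑ n ∈ S, #{t ∈ T | r t n} ^ B =
      ∑ p ∈ Fintype.piFinset (fun _ : Fin B => T), #{n ∈ S | ∀ i, r (p i) n} := by
  classical
  have hpow : ∀ n, #{t ∈ T | r t n} ^ B =
      #{p ∈ Fintype.piFinset (fun _ : Fin B => T) | ∀ i, r (p i) n} := by
    intro n
    rw [← Fintype.card_piFinset_const]
    congr 1
    ext p
    simp [Fintype.mem_piFinset, forall_and]
  simp_rw [hpow]
  exact sum_card_bipartiteAbove_eq_sum_card_bipartiteBelow _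

theorem card_Icc_filter_dvd_le (X L : ℕ) (hL : 0 < L) :
    (#{n ∈ Icc (-(X : ℤ)) X | (L : ℤ) ∣ n} : ℝ) ≤ 2 * X / L + 1 := by
  have hsub : {n ∈ Icc (-(X : ℤ)) X | (L : ℤ) ∣ n} ⊆
      (Icc (-((X / L : ℕ) : ℤ)) (X / L : ℕ)).image ((L : ℤ) * ·) := by
    intro n hn
    obtain ⟨hn, k, rfl⟩ := mem_filter.mp hn
    have hL' : (0 : ℤ) < L := by exact_mod_cast hL
    refine mem_image.mpr ⟨k, mem_Icc.mpr ?_, rfl⟩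
    rw [mem_Icc] at hn
    push_cast
    constructor
    · rw [neg_le, Int.le_ediv_iff_mul_le hL']; linarith
    · rw [Int.le_ediv_iff_mul_le hL']; linarith
  have hcard : #{n ∈ Icc (-(X : ℤ)) X | (L : ℤ) ∣ n} ≤ 2 * (X / L) + 1 := by
    have := card_le_card hsub |>.trans card_image_le
    rw [Int.card_Icc] at this
    omega
  have hdiv : ((X / L : ℕ) : ℝ) ≤ X / L := Nat.cast_div_le
  calc (#{n ∈ Icc (-(X : ℤ)) X | (L : ℤ) ∣ n} : ℝ) ≤ 2 * (X / L : ℕ) + 1 := by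
        exact_mod_cast hcard
    _ ≤ 2 * X / L + 1 := by rw [mul_div_assoc]; linarith

theorem card_truncDivisors_ge_mul_pow_le (B D Q X : ℕ) :
    (#{n ∈ Icc (-(X : ℤ)) X | D ≤ #{d ∈ Icc (1 : ℤ) Q | d ∣ n}} : ℝ) * D ^ B ≤
      2 * X * ∑ p ∈ Fintype.piFinset (fun _ : Fin B => Icc 1 Q), ((univ.lcm p : ℕ) : ℝ)⁻¹ +
        Q ^ B := by
  set S := Icc (-(X : ℤ)) X
  set P := Fintype.piFinset fun _ : Fin B => Icc 1 Q
  have hmarkov : #{n ∈ S | D ≤ #{d ∈ Icc (1 : ℤ) Q | d ∣ n}} * D ^ B ≤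
      ∑ n ∈ S, #{d ∈ Icc (1 : ℤ) Q | d ∣ n} ^ B := by
    rw [← smul_eq_mul]
    refine (card_nsmul_le_sum _ _ _ fun n hn => ?_).trans
      (sum_le_sum_of_subset_of_nonneg (filter_subset _ _) fun _ _ _ => Nat.zero_le _)
    exact Nat.pow_le_pow_left (mem_filter.mp hn).2 B
  have hmoment : ∑ n ∈ S, #{d ∈ Icc (1 : ℤ) Q | d ∣ n} ^ B =
      ∑ p ∈ P, #{n ∈ S | ((univ.lcm p : ℕ) : ℤ) ∣ n} := by
    simp_rw [card_Icc_filter_dvd_int_eq, sum_card_filter_pow_eq, Int.natCast_dvd,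
      Finset.lcm_dvd_iff, mem_univ, true_imp_iff]
    rfl
  have hmultiples : ∀ p ∈ P,
      (#{n ∈ S | ((univ.lcm p : ℕ) : ℤ) ∣ n} : ℝ) ≤ 2 * X * ((univ.lcm p : ℕ) : ℝ)⁻¹ + 1 := by
    intro p hp
    rw [← div_eq_mul_inv]
    exact card_Icc_filter_dvd_le X _ (mem_Icc.mp (lcm_mem_Icc_of_mem_piFinset hp)).1
  have hcard : (#P : ℝ) = (Q : ℝ) ^ B := by
    rw [Fintype.card_piFinset_const, Nat.card_Icc, Nat.add_sub_cancel]; push_cast; rfl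
  calc (#{n ∈ S | D ≤ #{d ∈ Icc (1 : ℤ) Q | d ∣ n}} : ℝ) * D ^ B
      ≤ ∑ p ∈ P, (#{n ∈ S | ((univ.lcm p : ℕ) : ℤ) ∣ n} : ℝ) := by
        exact_mod_cast hmarkov.trans hmoment.le
    _ ≤ ∑ p ∈ P, (2 * X * ((univ.lcm p : ℕ) : ℝ)⁻¹ + 1) := sum_le_sum hmultiples
    _ = _ := by rw [sum_add_distrib, ← mul_sum, sum_const, nsmul_one, hcard]

theorem pow_le_two_pow_mul_of_le_two_mul_rpow {Q X : ℝ} {B : ℕ} (hQ : 0 ≤ Q) (hX : 1 ≤ X)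
    (h : Q ≤ 2 * X ^ ((1 : ℝ) / B)) : Q ^ B ≤ 2 ^ B * X := by
  rcases B.eq_zero_or_pos with rfl | hB
  · simpa using hX
  calc Q ^ B ≤ (2 * X ^ ((1 : ℝ) / B)) ^ B := by gcongr
    _ = 2 ^ B * X := by
      rw [mul_pow, ← rpow_natCast (X ^ _), ← rpow_mul (by linarith),
        one_div_mul_cancel (by positivity), rpow_one]

/-- Truncated divisor bound: the number of `|n| ≤ X` with `d(n,Q) ≥ D` is
`≲_{ε,B} D^{-B} Q^ε X`, provided `Q ≤ 2 X^{1/B}`. -/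
theorem stmt_0 (B : ℕ) (ε : ℝ) (hε : 0 < ε) :
    ∃ C : ℝ, 0 < C ∧ ∀ D Q X : ℕ, 1 ≤ D → 1 ≤ Q → 1 ≤ X →
      (Q : ℝ) ≤ 2 * (X : ℝ) ^ ((1 : ℝ) / B) →
      ((((Finset.Icc (-(X : ℤ)) (X : ℤ)).filter
          (fun n => D ≤ ((Finset.Icc (1 : ℤ) (Q : ℤ)).filter (fun d => d ∣ n)).card)).card : ℝ))
        ≤ C * (D : ℝ) ^ (-(B : ℝ)) * (Q : ℝ) ^ ε * (X : ℝ) := by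
  obtain ⟨C, hC, hlcm⟩ := sum_inv_lcm_le_mul_rpow B hε
  refine ⟨2 * C + 2 ^ B, by positivity, fun D Q X hD hQ hX hQX => ?_⟩
  have hQB := pow_le_two_pow_mul_of_le_two_mul_rpow (by positivity) (by exact_mod_cast hX) hQX
  have hQε : (1 : ℝ) ≤ (Q : ℝ) ^ ε := one_le_rpow (by exact_mod_cast hQ) hε.le
  have hbound : (#{n ∈ Icc (-(X : ℤ)) X | D ≤ #{d ∈ Icc (1 : ℤ) Q | d ∣ n}} : ℝ) * D ^ B ≤
      (2 * C + 2 ^ B) * (Q : ℝ) ^ ε * X :=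
    calc _ ≤ 2 * X * (C * (Q : ℝ) ^ ε) + 2 ^ B * X :=
          (card_truncDivisors_ge_mul_pow_le B D Q X).trans (by gcongr; exact hlcm Q hQ)
      _ ≤ (2 * C + 2 ^ B) * (Q : ℝ) ^ ε * X := by
          nlinarith [mul_le_mul_of_nonneg_left hQε (by positivity : (0 : ℝ) ≤ 2 ^ B * X)]
  rw [rpow_neg (by positivity), rpow_natCast]
  calc _ = (#{n ∈ Icc (-(X : ℤ)) X | D ≤ #{d ∈ Icc (1 : ℤ) Q | d ∣ n}} : ℝ) * D ^ B *
        ((D : ℝ) ^ B)⁻¹ := by field_simp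
    _ ≤ (2 * C + 2 ^ B) * (Q : ℝ) ^ ε * X * ((D : ℝ) ^ B)⁻¹ := by gcongr
    _ = _ := by ring
end

section
/- For any B ∈ ℕ and ε > 0, there is a constant C(ε,B) such that for all integers Q, X ≥ 1 with Q ≤ 2·X^(1/B), one has ∑_{|ℓ| ≤ X} d(ℓ,Q)^B ≤ C(ε,B) · Q^ε · X, where the sum is over integers ℓ with |ℓ| ≤ X. -/
/-!
Raising `d(n, Q)` to the `B`-th power counts `B`-tuples of elements of `[1, Q]` dividing `n`, that
is, tuples whose lcm `m ≤ Q ^ B` divides `n`. Summing over `1 ≤ n ≤ X` gives at most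
`X ∑_{m ≤ Q^B} τ(m)^B / m`, which the divisor bound `τ(m) ≪_δ m ^ δ` and the harmonic bound
`∑_{m ≤ M} 1/m ≤ 1 + log M` make `≪ X Q^ε`. Finally `ℓ` and `-ℓ` contribute equally, and `ℓ = 0`
contributes `Q ^ B ≤ 2 ^ B X` by the hypothesis on `Q`.
-/

open Finset

lemma add_one_le_mul_two_pow_rpow {δ : ℝ} (hδ : 0 < δ) (a : ℕ) :
    (a + 1 : ℝ) ≤ (1 + (δ * Real.log 2)⁻¹) * ((2 : ℝ) ^ a) ^ δ := by
  set c := δ * Real.log 2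
  have hc : 0 < c := mul_pos hδ (Real.log_pos one_lt_two)
  have hexp : 1 + a * c ≤ ((2 : ℝ) ^ a) ^ δ := by
    rw [← Real.rpow_natCast, ← Real.rpow_mul zero_le_two, Real.rpow_def_of_pos two_pos,
      show Real.log 2 * (a * δ) = a * c by ring]
    linarith [Real.add_one_le_exp (a * c)]
  have hexpand : (1 + c⁻¹) * (1 + a * c) = a + 1 + a * c + c⁻¹ := by field_simp; ring
  calc (a + 1 : ℝ) ≤ (1 + c⁻¹) * (1 + a * c) := by
        rw [hexpand]; linarith [inv_pos.2 hc, mul_nonneg a.cast_nonneg hc.le]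
    _ ≤ (1 + c⁻¹) * ((2 : ℝ) ^ a) ^ δ := by gcongr

lemma add_one_le_pow_rpow {x δ : ℝ} (hx : 0 ≤ x) (h : 2 ≤ x ^ δ) (a : ℕ) :
    (a + 1 : ℝ) ≤ (x ^ a) ^ δ := by
  rw [← Real.rpow_pow_comm hx]
  calc (a + 1 : ℝ) ≤ 2 ^ a := by exact_mod_cast Nat.lt_two_pow_self
    _ ≤ (x ^ δ) ^ a := pow_le_pow_left₀ zero_le_two h a

lemma add_one_le_ite_mul_prime_pow_rpow {δ : ℝ} (hδ : 0 < δ) {p : ℕ} (hp : p.Prime) (a : ℕ) :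
    (a + 1 : ℝ) ≤
      (if p < ⌈(2 : ℝ) ^ δ⁻¹⌉₊ then 1 + (δ * Real.log 2)⁻¹ else 1) * ((p : ℝ) ^ a) ^ δ := by
  have hp2 : (2 : ℝ) ≤ p := by exact_mod_cast hp.two_le
  split_ifs with hpP
  · refine (add_one_le_mul_two_pow_rpow hδ a).trans ?_
    gcongr
  · rw [one_mul]
    refine add_one_le_pow_rpow (by positivity) ?_ a
    calc (2 : ℝ) = ((2 : ℝ) ^ δ⁻¹) ^ δ := (Real.rpow_inv_rpow zero_le_two hδ.ne').symm
      _ ≤ (p : ℝ) ^ δ := by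
        gcongr
        exact (Nat.le_ceil _).trans (by exact_mod_cast not_lt.mp hpP)

/-- Primes `p ≥ 2 ^ δ⁻¹` contribute a factor at most `1` to `τ(n) / n ^ δ`, and each of the fewer
than `⌈2 ^ δ⁻¹⌉` smaller primes a factor at most `1 + (δ log 2)⁻¹`. -/
theorem exists_card_divisors_le_mul_rpow {δ : ℝ} (hδ : 0 < δ) :
    ∃ C : ℝ, 0 < C ∧ ∀ n : ℕ, n ≠ 0 → (#n.divisors : ℝ) ≤ C * (n : ℝ) ^ δ := by
  set K : ℝ := 1 + (δ * Real.log 2)⁻¹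
  set P := ⌈(2 : ℝ) ^ δ⁻¹⌉₊
  have hK : 1 ≤ K := le_add_of_nonneg_right (inv_nonneg.2 (by positivity))
  refine ⟨K ^ P, by positivity, fun n hn => ?_⟩
  have hsmall : ∏ p ∈ n.primeFactors, (if p < P then K else 1) ≤ K ^ P := by
    rw [prod_ite, prod_const, prod_const_one, mul_one]
    refine pow_le_pow_right₀ hK ((card_le_card fun p hp => ?_).trans_eq (card_range P))
    exact mem_range.2 (mem_filter.1 hp).2
  have hprod : ∏ p ∈ n.primeFactors, ((p : ℝ) ^ n.factorization p) ^ δ = (n : ℝ) ^ δ := by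
    rw [Real.finsetProd_rpow _ _ fun p _ => by positivity]
    exact_mod_cast congrArg (fun m : ℕ => (m : ℝ) ^ δ)
      (Nat.prod_primeFactors_pow_factorization hn).symm
  calc (#n.divisors : ℝ) = ∏ p ∈ n.primeFactors, (n.factorization p + 1 : ℝ) := by
        rw [Nat.card_divisors hn]; push_cast; rfl
    _ ≤ ∏ p ∈ n.primeFactors, ((if p < P then K else 1) * ((p : ℝ) ^ n.factorization p) ^ δ) :=
        prod_le_prod (fun _ _ => by positivity) fun p hp =>
          add_one_le_ite_mul_prime_pow_rpow hδ (Nat.prime_of_mem_primeFactors hp) _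
    _ = (∏ p ∈ n.primeFactors, (if p < P then K else 1)) * (n : ℝ) ^ δ := by
        rw [prod_mul_distrib, hprod]
    _ ≤ K ^ P * (n : ℝ) ^ δ := by gcongr

theorem exists_card_divisors_pow_le_mul_rpow (B : ℕ) {δ : ℝ} (hδ : 0 < δ) :
    ∃ C : ℝ, 0 < C ∧ ∀ n : ℕ, n ≠ 0 → (#n.divisors : ℝ) ^ B ≤ C * (n : ℝ) ^ δ := by
  rcases Nat.eq_zero_or_pos B with rfl | hB
  · exact ⟨1, one_pos, fun n hn => by
      simpa using Real.one_le_rpow (by exact_mod_cast Nat.one_le_iff_ne_zero.2 hn) hδ.le⟩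
  obtain ⟨C, hC, hτ⟩ := exists_card_divisors_le_mul_rpow (div_pos hδ (Nat.cast_pos.2 hB))
  refine ⟨C ^ B, by positivity, fun n hn => ?_⟩
  calc (#n.divisors : ℝ) ^ B ≤ (C * (n : ℝ) ^ (δ / B)) ^ B := by gcongr; exact hτ n hn
    _ = C ^ B * (n : ℝ) ^ δ := by
        rw [mul_pow, ← Real.rpow_mul_natCast n.cast_nonneg, div_mul_cancel₀ _ (by positivity)]

lemma sum_Icc_inv_le_mul_rpow_s1 (M : ℕ) {δ : ℝ} (hδ : 0 < δ) :
    ∑ m ∈ Icc 1 M, (m : ℝ)⁻¹ ≤ (1 + δ⁻¹) * (M : ℝ) ^ δ := by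
  rcases Nat.eq_zero_or_pos M with rfl | hM
  · rw [Icc_eq_empty_of_lt zero_lt_one, sum_empty]; positivity
  have hM1 : (1 : ℝ) ≤ (M : ℝ) ^ δ := Real.one_le_rpow (by exact_mod_cast hM) hδ.le
  calc ∑ m ∈ Icc 1 M, (m : ℝ)⁻¹ = harmonic M := by rw [harmonic_eq_sum_Icc]; push_cast; rfl
    _ ≤ 1 + Real.log M := harmonic_le_one_add_log M
    _ ≤ (M : ℝ) ^ δ + (M : ℝ) ^ δ / δ := add_le_add hM1 (Real.log_natCast_le_rpow_div M hδ)
    _ = (1 + δ⁻¹) * (M : ℝ) ^ δ := by ring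

theorem exists_sum_card_divisors_pow_div_le_mul_rpow (B : ℕ) {δ : ℝ} (hδ : 0 < δ) :
    ∃ D : ℝ, 0 < D ∧ ∀ M : ℕ, ∑ m ∈ Icc 1 M, (#m.divisors : ℝ) ^ B / m ≤ D * (M : ℝ) ^ δ := by
  obtain ⟨C, hC, hτ⟩ := exists_card_divisors_pow_le_mul_rpow B (half_pos hδ)
  refine ⟨C * (1 + (δ / 2)⁻¹), by positivity, fun M => ?_⟩
  calc ∑ m ∈ Icc 1 M, (#m.divisors : ℝ) ^ B / m
      ≤ ∑ m ∈ Icc 1 M, C * (M : ℝ) ^ (δ / 2) * (m : ℝ)⁻¹ := by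
        refine sum_le_sum fun m hm => ?_
        obtain ⟨hm1, hmM⟩ := mem_Icc.1 hm
        rw [div_eq_mul_inv]
        gcongr
        exact (hτ m (by omega)).trans (by gcongr)
    _ = C * (M : ℝ) ^ (δ / 2) * ∑ m ∈ Icc 1 M, (m : ℝ)⁻¹ := by rw [mul_sum]
    _ ≤ C * (M : ℝ) ^ (δ / 2) * ((1 + (δ / 2)⁻¹) * (M : ℝ) ^ (δ / 2)) := by
        gcongr; exact sum_Icc_inv_le_mul_rpow_s1 M (half_pos hδ)
    _ = C * (1 + (δ / 2)⁻¹) * ((M : ℝ) ^ (δ / 2) * (M : ℝ) ^ (δ / 2)) := by ring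
    _ = C * (1 + (δ / 2)⁻¹) * (M : ℝ) ^ δ := by
        rw [← Real.rpow_add' M.cast_nonneg (by positivity), add_halves]

lemma card_filter_dvd_pow (s : Finset ℕ) (B n : ℕ) :
    #{d ∈ s | d ∣ n} ^ B = #{f ∈ Fintype.piFinset fun _ : Fin B => s | univ.lcm f ∣ n} := by
  rw [← Fintype.card_piFinset_const]
  congr 1
  ext f
  simp only [Fintype.mem_piFinset, mem_filter, Finset.lcm_dvd_iff, mem_univ, true_implies,
    forall_and]

lemma sum_card_filter_dvd_pow_eq (s : Finset ℕ) (B X : ℕ) :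
    ∑ n ∈ Icc 1 X, #{d ∈ s | d ∣ n} ^ B =
      ∑ f ∈ Fintype.piFinset (fun _ : Fin B => s), X / univ.lcm f := by
  simp_rw [card_filter_dvd_pow, card_filter]
  rw [sum_comm]
  refine sum_congr rfl fun f _ => ?_
  rw [← card_filter, ← Nat.Ioc_filter_dvd_card_eq_div, ← Finset.Icc_add_one_left_eq_Ioc, zero_add]

lemma lcm_mem_Icc_pow {B Q : ℕ} {f : Fin B → ℕ} (hf : f ∈ Fintype.piFinset fun _ => Icc 1 Q) :
    univ.lcm f ∈ Icc 1 (Q ^ B) := by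
  simp only [Fintype.mem_piFinset, mem_Icc] at hf
  have hdvd : univ.lcm f ∣ ∏ i, f i := Finset.lcm_dvd fun i _ => dvd_prod_of_mem f (mem_univ i)
  have hprod : 0 < ∏ i, f i := prod_pos fun i _ => (hf i).1
  refine mem_Icc.2 ⟨Nat.pos_of_dvd_of_pos hdvd hprod, (Nat.le_of_dvd hprod hdvd).trans ?_⟩
  simpa using prod_le_prod' fun i (_ : i ∈ univ) => (hf i).2

lemma card_filter_lcm_eq_le {B : ℕ} (s : Finset (Fin B → ℕ)) {m : ℕ} (hm : m ≠ 0) :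
    #{f ∈ s | univ.lcm f = m} ≤ #m.divisors ^ B := by
  rw [← Fintype.card_piFinset_const]
  refine card_le_card fun f hf => Fintype.mem_piFinset.2 fun i => ?_
  exact Nat.mem_divisors.2 ⟨(mem_filter.1 hf).2 ▸ Finset.dvd_lcm (mem_univ i), hm⟩

theorem sum_card_filter_dvd_pow_le (B Q X : ℕ) :
    ∑ n ∈ Icc 1 X, (#{d ∈ Icc 1 Q | d ∣ n} : ℝ) ^ B ≤
      X * ∑ m ∈ Icc 1 (Q ^ B), (#m.divisors : ℝ) ^ B / m := by
  set T := Fintype.piFinset fun _ : Fin B => Icc 1 Q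
  calc ∑ n ∈ Icc 1 X, (#{d ∈ Icc 1 Q | d ∣ n} : ℝ) ^ B
      = ∑ f ∈ T, ((X / univ.lcm f : ℕ) : ℝ) := by
        exact_mod_cast sum_card_filter_dvd_pow_eq (Icc 1 Q) B X
    _ ≤ ∑ f ∈ T, (X : ℝ) / univ.lcm f := sum_le_sum fun f _ => Nat.cast_div_le
    _ = ∑ m ∈ Icc 1 (Q ^ B), ∑ f ∈ T with univ.lcm f = m, (X : ℝ) / m := by
        rw [← sum_fiberwise_of_maps_to fun f hf => lcm_mem_Icc_pow hf]
        exact sum_congr rfl fun m _ => sum_congr rfl fun f hf => by rw [(mem_filter.1 hf).2]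
    _ ≤ ∑ m ∈ Icc 1 (Q ^ B), (#m.divisors : ℝ) ^ B * ((X : ℝ) / m) := by
        simp only [sum_const, nsmul_eq_mul]
        gcongr with m hm
        exact_mod_cast card_filter_lcm_eq_le T (Nat.one_le_iff_ne_zero.1 (mem_Icc.1 hm).1)
    _ = X * ∑ m ∈ Icc 1 (Q ^ B), (#m.divisors : ℝ) ^ B / m := by
        rw [mul_sum]; exact sum_congr rfl fun m _ => by ring

lemma sum_Icc_neg_comp_natAbs {M : Type*} [AddCommMonoid M] (g : ℕ → M) (X : ℕ) :
    ∑ ℓ ∈ Icc (-(X : ℤ)) X, g ℓ.natAbs = g 0 + 2 • ∑ n ∈ Icc 1 X, g n := by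
  induction X with
  | zero => simp
  | succ X ih =>
    have hIcc : Icc (-((X + 1 : ℕ) : ℤ)) (X + 1 : ℕ) =
        insert (-((X + 1 : ℕ) : ℤ)) (insert ((X + 1 : ℕ) : ℤ) (Icc (-(X : ℤ)) X)) := by
      ext; simp only [mem_insert, mem_Icc]; omega
    rw [hIcc, sum_insert (by simp only [mem_insert, mem_Icc]; omega),
      sum_insert (by simp only [mem_Icc]; omega), ih, sum_Icc_succ_top (Nat.le_add_left 1 X),
      Int.natAbs_neg, Int.natAbs_natCast]
    abel

lemma card_filter_int_dvd (Q : ℕ) (ℓ : ℤ) :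
    #{d ∈ Icc (1 : ℤ) Q | d ∣ ℓ} = #{n ∈ Icc 1 Q | n ∣ ℓ.natAbs} := by
  rw [← card_map (Nat.castEmbedding : ℕ ↪ ℤ)]
  congr 1
  ext d
  simp only [mem_filter, mem_Icc, mem_map, Nat.castEmbedding_apply]
  constructor
  · rintro ⟨⟨h1, h2⟩, h⟩
    lift d to ℕ using by omega
    exact ⟨d, ⟨⟨by omega, by omega⟩, Int.natCast_dvd.1 h⟩, rfl⟩
  · rintro ⟨n, ⟨⟨h1, h2⟩, h⟩, rfl⟩
    exact ⟨⟨by omega, by omega⟩, Int.natCast_dvd.2 h⟩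

lemma sum_Icc_int_card_filter_dvd_pow (B Q X : ℕ) :
    ∑ ℓ ∈ Icc (-(X : ℤ)) X, (#{d ∈ Icc (1 : ℤ) Q | d ∣ ℓ} : ℝ) ^ B =
      (Q : ℝ) ^ B + 2 * ∑ n ∈ Icc 1 X, (#{d ∈ Icc 1 Q | d ∣ n} : ℝ) ^ B := by
  simp_rw [card_filter_int_dvd]
  rw [sum_Icc_neg_comp_natAbs (fun n => (#{d ∈ Icc 1 Q | d ∣ n} : ℝ) ^ B), nsmul_eq_mul,
    filter_true_of_mem fun d _ => dvd_zero d, Nat.card_Icc, Nat.add_sub_cancel, Nat.cast_ofNat]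

lemma pow_le_two_pow_mul_of_le_two_mul_rpow_s1 {x y : ℝ} {B : ℕ} (hx : 0 ≤ x) (hy : 1 ≤ y)
    (h : x ≤ 2 * y ^ ((1 : ℝ) / B)) : x ^ B ≤ 2 ^ B * y := by
  have hyB : (y ^ ((1 : ℝ) / B)) ^ B ≤ y := by
    rcases eq_or_ne B 0 with rfl | hB
    · simpa using hy
    · rw [one_div, Real.rpow_inv_natCast_pow (by linarith) hB]
  calc x ^ B ≤ (2 * y ^ ((1 : ℝ) / B)) ^ B := pow_le_pow_left₀ hx h B
    _ = 2 ^ B * (y ^ ((1 : ℝ) / B)) ^ B := mul_pow _ _ _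
    _ ≤ 2 ^ B * y := by gcongr

/-- Moment bound for the truncated divisor function:
`∑_{|ℓ| ≤ X} d(ℓ,Q)^B ≤ C(ε,B) Q^ε X` whenever `Q ≤ 2 X^{1/B}`. -/
theorem stmt_1 (B : ℕ) (ε : ℝ) (hε : 0 < ε) :
    ∃ C : ℝ, 0 < C ∧ ∀ Q X : ℕ, 1 ≤ Q → 1 ≤ X →
      (Q : ℝ) ≤ 2 * (X : ℝ) ^ ((1 : ℝ) / B) →
      ∑ ℓ ∈ Finset.Icc (-(X : ℤ)) (X : ℤ),
          ((((Finset.Icc (1 : ℤ) (Q : ℤ)).filter (fun d => d ∣ ℓ)).card : ℝ)) ^ B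
        ≤ C * (Q : ℝ) ^ ε * (X : ℝ) := by
  obtain ⟨D, hD, hsum⟩ :=
    exists_sum_card_divisors_pow_div_le_mul_rpow B (δ := ε / (B + 1)) (by positivity)
  refine ⟨2 ^ B + 2 * D, by positivity, fun Q X hQ hX hQX => ?_⟩
  have hQ1 : (1 : ℝ) ≤ Q := by exact_mod_cast hQ
  have hX1 : (1 : ℝ) ≤ X := by exact_mod_cast hX
  have hQε : 1 ≤ (Q : ℝ) ^ ε := Real.one_le_rpow hQ1 hε.le
  have hpow : ((Q ^ B : ℕ) : ℝ) ^ (ε / (B + 1)) ≤ (Q : ℝ) ^ ε := by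
    rw [Nat.cast_pow, ← Real.rpow_natCast_mul (by positivity)]
    refine Real.rpow_le_rpow_of_exponent_le hQ1 ?_
    rw [mul_div_assoc', div_le_iff₀ (by positivity)]
    linarith
  have hzero : (Q : ℝ) ^ B ≤ 2 ^ B * X :=
    pow_le_two_pow_mul_of_le_two_mul_rpow_s1 (by positivity) hX1 hQX
  have hnonzero : ∑ n ∈ Icc 1 X, (#{d ∈ Icc 1 Q | d ∣ n} : ℝ) ^ B ≤ X * (D * (Q : ℝ) ^ ε) :=
    (sum_card_filter_dvd_pow_le B Q X).trans (by gcongr; exact (hsum _).trans (by gcongr))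
  rw [sum_Icc_int_card_filter_dvd_pow]
  linarith [mul_le_mul_of_nonneg_left hQε (by positivity : (0 : ℝ) ≤ 2 ^ B * X)]
end

section
/- Let δ_{a/q} denote the Dirac measure at a/q on the torus ℝ/ℤ. For any integer Q ≥ 1 and any n ∈ ℤ, the Fourier coefficient of the measure μ = ∑_{q ∼ Q} ∑_{1 ≤ a ≤ q, gcd(a,q)=1} δ_{a/q} satisfies |μ̂(n)| = |∑_{q ∼ Q} ∑_{(a,q)=1} e(−n a/q)| ≲ Q · d(n, 2Q). -/
/-!
Möbius inversion of the coprimality condition gives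
`c_q(n) = ∑_{d ∣ q} μ(d) (q/d) [q/d ∣ n]`, hence `|c_q(n)| ≤ ∑_{e ∣ q, e ∣ n} e`.
Summing over `Q ≤ q < 2Q` and exchanging the sums, each divisor `e ≤ 2Q` of `n` contributes
`e` times the number of multiples of `e` in `(0, 2Q]`, which is at most `2Q`; so `C = 2` works.
-/

open Finset Real

open ArithmeticFunction
open scoped ArithmeticFunction.Moebius

theorem sum_Icc_exp_two_pi_I_mul_div (k : ℤ) {m : ℕ} (hm : m ≠ 0) :
    ∑ b ∈ Icc 1 m, Complex.exp (2 * π * Complex.I * (k * b / m)) =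
      if (m : ℤ) ∣ k then (m : ℂ) else 0 := by
  have hω := Complex.isPrimitiveRoot_exp m hm
  set ζ := Complex.exp (2 * π * Complex.I / m) ^ k
  have hpow (b : ℕ) : Complex.exp (2 * π * Complex.I * (k * b / m)) = ζ ^ b := by
    rw [← zpow_natCast, ← zpow_mul, ← Complex.exp_int_mul]
    push_cast; ring_nf
  have hshift : ∑ b ∈ Icc 1 m, ζ ^ b = ζ * ∑ b ∈ range m, ζ ^ b := by
    rw [mul_sum, ← Ico_add_one_right_eq_Icc, sum_Ico_eq_sum_range]
    simp only [pow_add, pow_one, Nat.add_sub_cancel]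
  simp only [hpow, hshift]
  split_ifs with hdvd
  · simp [ζ, (hω.zpow_eq_one_iff_dvd k).mpr hdvd]
  · have hζm : ζ ^ m = 1 := by
      rw [← zpow_natCast, ← zpow_mul, mul_comm k, zpow_mul, zpow_natCast, hω.pow_eq_one, one_zpow]
    rw [geom_sum_eq (by rwa [Ne, hω.zpow_eq_one_iff_dvd]), hζm, sub_self, zero_div, mul_zero]

theorem sum_divisors_moebius (n : ℕ) : ∑ d ∈ n.divisors, μ d = if n = 1 then 1 else 0 := by
  rw [← coe_mul_zeta_apply, moebius_mul_coe_zeta, one_apply]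

theorem divisors_gcd_eq_filter {q : ℕ} (hq : q ≠ 0) (a : ℕ) :
    (a.gcd q).divisors = {d ∈ q.divisors | d ∣ a} := by
  ext d
  simp only [Nat.mem_divisors, mem_filter, Nat.dvd_gcd_iff, ne_eq, Nat.gcd_eq_zero_iff]
  tauto

theorem filter_dvd_Icc_eq_image {d : ℕ} (hd : 0 < d) (q : ℕ) :
    {a ∈ Icc 1 q | d ∣ a} = (Icc 1 (q / d)).image (d * ·) := by
  ext a
  simp only [mem_filter, mem_Icc, mem_image]
  constructor
  · rintro ⟨⟨ha1, haq⟩, b, rfl⟩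
    exact ⟨b, ⟨Nat.pos_of_mul_pos_left ha1, (Nat.le_div_iff_mul_le hd).2 (by linarith)⟩, rfl⟩
  · rintro ⟨b, ⟨hb1, hbq⟩, rfl⟩
    exact ⟨⟨Nat.mul_pos hd hb1, (Nat.mul_le_mul_left d hbq).trans (Nat.mul_div_le q d)⟩,
      dvd_mul_right d b⟩

theorem sum_Icc_filter_coprime_eq_sum_moebius {M : Type*} [AddCommGroup M] (q : ℕ) (f : ℕ → M) :
    ∑ a ∈ Icc 1 q with a.gcd q = 1, f a =
      ∑ d ∈ q.divisors, μ d • ∑ b ∈ Icc 1 (q / d), f (d * b) := by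
  rcases eq_or_ne q 0 with rfl | hq
  · simp
  calc ∑ a ∈ Icc 1 q with a.gcd q = 1, f a
      = ∑ a ∈ Icc 1 q, ∑ d ∈ q.divisors with d ∣ a, μ d • f a := by
        rw [sum_filter]
        refine sum_congr rfl fun a _ => ?_
        rw [← sum_smul, ← divisors_gcd_eq_filter hq, sum_divisors_moebius]
        split_ifs <;> simp
    _ = ∑ d ∈ q.divisors, ∑ a ∈ Icc 1 q with d ∣ a, μ d • f a :=
        sum_comm' fun a d => by simp only [mem_filter]; tauto
    _ = _ := sum_congr rfl fun d hd => by
        rw [← smul_sum, filter_dvd_Icc_eq_image (Nat.pos_of_mem_divisors hd),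
          sum_image fun a _ b _ h => Nat.eq_of_mul_eq_mul_left (Nat.pos_of_mem_divisors hd) h]

noncomputable def ramanujanSum (q : ℕ) (n : ℤ) : ℂ :=
  ∑ a ∈ Icc 1 q with a.gcd q = 1, Complex.exp (2 * π * Complex.I * (-(n : ℂ) * a / q))

theorem ramanujanSum_eq_sum_moebius (q : ℕ) (n : ℤ) :
    ramanujanSum q n =
      ∑ d ∈ q.divisors, μ d • if ((q / d : ℕ) : ℤ) ∣ n then ((q / d : ℕ) : ℂ) else 0 := by
  rw [ramanujanSum, sum_Icc_filter_coprime_eq_sum_moebius]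
  refine sum_congr rfl fun d hd => ?_
  obtain ⟨⟨m, rfl⟩, hq⟩ := Nat.mem_divisors.mp hd
  have hd : d ≠ 0 := left_ne_zero_of_mul hq
  have h := sum_Icc_exp_two_pi_I_mul_div (-n) (right_ne_zero_of_mul hq)
  simp only [Int.dvd_neg, Int.cast_neg] at h
  rw [Nat.mul_div_cancel_left m (Nat.pos_of_ne_zero hd), ← h]
  congr! 3 with b
  push_cast
  field_simp

theorem norm_ramanujanSum_le (q : ℕ) (n : ℤ) :
    ‖ramanujanSum q n‖ ≤ ∑ e ∈ q.divisors with ((e : ℕ) : ℤ) ∣ n, (e : ℝ) := by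
  rw [ramanujanSum_eq_sum_moebius, sum_filter]
  refine (norm_sum_le _ _).trans ((sum_le_sum fun d _ => ?_).trans_eq
    (Nat.sum_div_divisors q fun e => if (e : ℤ) ∣ n then (e : ℝ) else 0))
  rw [norm_zsmul ℝ, Real.norm_eq_abs]
  refine (mul_le_of_le_one_left (norm_nonneg _) (by exact_mod_cast abs_moebius_le_one)).trans ?_
  split_ifs <;> simp

theorem sum_sum_divisors_filter_le_mul_card {s : Finset ℕ} {N : ℕ} (hs : s ⊆ Ioc 0 N) (p : ℕ → Prop)
    [DecidablePred p] :
    ∑ q ∈ s, ∑ e ∈ q.divisors with p e, e ≤ N * #{e ∈ Icc 1 N | p e} := by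
  calc ∑ q ∈ s, ∑ e ∈ q.divisors with p e, e
      = ∑ q ∈ s, ∑ e ∈ Icc 1 N with p e, if e ∣ q then e else 0 := sum_congr rfl fun q hq => by
        have hq := mem_Ioc.mp (hs hq)
        rw [← sum_filter, filter_filter]
        congr 1
        ext e
        simp only [mem_filter, Nat.mem_divisors, mem_Icc]
        constructor
        · rintro ⟨⟨he, -⟩, hp⟩
          exact ⟨⟨Nat.pos_of_dvd_of_pos he hq.1, (Nat.le_of_dvd hq.1 he).trans hq.2⟩, hp, he⟩
        · rintro ⟨-, hp, he⟩
          exact ⟨⟨he, hq.1.ne'⟩, hp⟩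
    _ = ∑ e ∈ Icc 1 N with p e, #{q ∈ s | e ∣ q} * e := by
        rw [sum_comm]
        simp only [← sum_filter, sum_const, smul_eq_mul]
    _ ≤ ∑ e ∈ Icc 1 N with p e, N := sum_le_sum fun e _ => by
        calc #{q ∈ s | e ∣ q} * e ≤ #{q ∈ Ioc 0 N | e ∣ q} * e :=
              Nat.mul_le_mul_right e (card_le_card (filter_subset_filter _ hs))
          _ ≤ N := by rw [Nat.Ioc_filter_dvd_card_eq_div]; exact Nat.div_mul_le_self N e
    _ = N * #{e ∈ Icc 1 N | p e} := by rw [sum_const, smul_eq_mul, mul_comm]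

/-- Bourgain's divisor bound for the Fourier coefficients of the sum of Dirac
measures at reduced fractions `a/q` with `Q ≤ q < 2Q`:
`|∑_{q ∼ Q} ∑_{(a,q)=1} e(-n a/q)| ≲ Q · d(n, 2Q)`. -/
theorem stmt_2 :
    ∃ C : ℝ, 0 < C ∧ ∀ Q : ℕ, 1 ≤ Q → ∀ n : ℤ,
      ‖∑ q ∈ Finset.Ico Q (2 * Q),
          ∑ a ∈ (Finset.Icc 1 q).filter (fun a => Nat.gcd a q = 1),
            Complex.exp (2 * Real.pi * Complex.I * (-(n : ℂ) * a / q))‖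
        ≤ C * (Q : ℝ) * (((Finset.Icc (1 : ℤ) (2 * (Q : ℤ))).filter (fun d => d ∣ n)).card : ℝ) := by
  refine ⟨2, two_pos, fun Q _ n => ?_⟩
  have hs : Ico Q (2 * Q) ⊆ Ioc 0 (2 * Q) := fun q hq => by
    simp only [mem_Ico, mem_Ioc] at hq ⊢
    omega
  calc ‖∑ q ∈ Ico Q (2 * Q), ramanujanSum q n‖
      ≤ ∑ q ∈ Ico Q (2 * Q), ∑ e ∈ q.divisors with ((e : ℕ) : ℤ) ∣ n, (e : ℝ) :=
        (norm_sum_le _ _).trans (sum_le_sum fun q _ => norm_ramanujanSum_le q n)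
    _ ≤ 2 * Q * #{e ∈ Icc 1 (2 * Q) | ((e : ℕ) : ℤ) ∣ n} := by
        have h := Nat.cast_le (α := ℝ) |>.mpr
          (sum_sum_divisors_filter_le_mul_card hs fun e : ℕ => (e : ℤ) ∣ n)
        push_cast at h
        exact h
    _ ≤ 2 * Q * #{d ∈ Icc (1 : ℤ) (2 * Q) | d ∣ n} := by
        gcongr
        refine card_le_card_of_injOn (fun e : ℕ => (e : ℤ)) (fun e he => ?_)
          Nat.cast_injective.injOn
        simp only [mem_coe, mem_filter, mem_Icc] at he ⊢
        exact ⟨⟨by omega, by omega⟩, he.2⟩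
end
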